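/- Let K ∈ ℝ^{m×n} and x₁ ∈ ℝⁿ be such that there exists z ∈ ℝ^m with DᵀD̂x₁ = Kᵀz, where Dᵀ(p,q) = Dhᵀp + Dvᵀq for (p,q) ∈ ℝ^{2n}. Let x₂ ∈ ℝⁿ satisfy Kx₂ = Kx₁ and x₂ ∉ S₁, where S₁ = {v ∈ ℝⁿ : |Dv|_i = 0 for all i with |Dx₁|_i = 0}. Then ‖Dx₁‖_{2,1} < ‖Dx₂‖_{2,1}. -/

import Mathlib

open Matrix Finset

/-- Gradient magnitude: `|Dx|_i = sqrt((Dh x)_i² + (Dv x)_i²)`. -/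
noncomputable def gMag {n : ℕ} (Dh Dv : Matrix (Fin n) (Fin n) ℝ)
    (x : Fin n → ℝ) (i : Fin n) : ℝ :=
  Real.sqrt ((Dh.mulVec x i) ^ 2 + (Dv.mulVec x i) ^ 2)

/-- Horizontal component of the normalized gradient `D̂x`. -/
noncomputable def nGradH {n : ℕ} (Dh Dv : Matrix (Fin n) (Fin n) ℝ)
    (x : Fin n → ℝ) (i : Fin n) : ℝ :=
  if gMag Dh Dv x i = 0 then 1 / 2 else Dh.mulVec x i / gMag Dh Dv x i

/-- Vertical component of the normalized gradient `D̂x`. -/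
noncomputable def nGradV {n : ℕ} (Dh Dv : Matrix (Fin n) (Fin n) ℝ)
    (x : Fin n → ℝ) (i : Fin n) : ℝ :=
  if gMag Dh Dv x i = 0 then 1 / 2 else Dv.mulVec x i / gMag Dh Dv x i

/-- `S₁ = {v ∈ ℝⁿ : |Dv|_i = 0 for all i with |Dx₁|_i = 0}`. -/
def S1 {n : ℕ} (Dh Dv : Matrix (Fin n) (Fin n) ℝ) (x₁ : Fin n → ℝ) :
    Set (Fin n → ℝ) :=
  {v | ∀ i, gMag Dh Dv x₁ i = 0 → gMag Dh Dv v i = 0}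

/-
The normalized gradient `D̂x₁` is a subgradient of `‖D·‖_{2,1}` at `x₁`: pointwise it pairs with
`Dx₁` to `|Dx₁|_i` and, by Cauchy–Schwarz, with any `Dx` to at most `|Dx|_i`. Since `DᵀD̂x₁ = Kᵀz`
and `Kx₂ = Kx₁`, it pairs with `Dx₂` and `Dx₁` to the same total, so `‖Dx₁‖_{2,1} ≤ ‖Dx₂‖_{2,1}`.
Where `|Dx₁|_i = 0` the subgradient is `(1/2, 1/2)`, of norm `< 1`, so the inequality is strict at
any such `i` with `|Dx₂|_i ≠ 0`, which is exactly what `x₂ ∉ S₁` provides.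
-/

lemma mul_add_mul_le_sqrt_mul_sqrt (a b c d : ℝ) :
    a * c + b * d ≤ √(a ^ 2 + b ^ 2) * √(c ^ 2 + d ^ 2) := by
  rw [← Real.sqrt_mul (by positivity)]
  refine Real.le_sqrt_of_sq_le ?_
  nlinarith [sq_nonneg (a * d - b * c)]

lemma half_add_half_lt_sqrt {a b : ℝ} (h : √(a ^ 2 + b ^ 2) ≠ 0) :
    1 / 2 * a + 1 / 2 * b < √(a ^ 2 + b ^ 2) := by
  have hpos : 0 < √(a ^ 2 + b ^ 2) := lt_of_le_of_ne (Real.sqrt_nonneg _) h.symm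
  have hsq : √(a ^ 2 + b ^ 2) ^ 2 = a ^ 2 + b ^ 2 := Real.sq_sqrt (by positivity)
  nlinarith [sq_nonneg (a - b)]

lemma transpose_mulVec_add_dotProduct {ι κ R : Type*} [Fintype ι] [Fintype κ] [CommSemiring R]
    (A B : Matrix ι κ R) (p q : ι → R) (x : κ → R) :
    (Aᵀ *ᵥ p + Bᵀ *ᵥ q) ⬝ᵥ x = ∑ i, (p i * (A *ᵥ x) i + q i * (B *ᵥ x) i) := by
  rw [add_dotProduct, mulVec_transpose, mulVec_transpose, ← dotProduct_mulVec,
    ← dotProduct_mulVec, dotProduct, dotProduct, ← sum_add_distrib]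

section NormalizedGradient

variable {n : ℕ} (Dh Dv : Matrix (Fin n) (Fin n) ℝ)

lemma gMag_eq_zero_iff {x : Fin n → ℝ} {i : Fin n} :
    gMag Dh Dv x i = 0 ↔ (Dh *ᵥ x) i = 0 ∧ (Dv *ᵥ x) i = 0 := by
  rw [gMag, Real.sqrt_eq_zero (by positivity), add_eq_zero_iff_of_nonneg (sq_nonneg _)
    (sq_nonneg _), sq_eq_zero_iff, sq_eq_zero_iff]

lemma nGrad_pairing_self (x : Fin n → ℝ) (i : Fin n) :
    nGradH Dh Dv x i * (Dh *ᵥ x) i + nGradV Dh Dv x i * (Dv *ᵥ x) i = gMag Dh Dv x i := by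
  by_cases h : gMag Dh Dv x i = 0
  · obtain ⟨hh, hv⟩ := (gMag_eq_zero_iff Dh Dv).mp h
    simp [h, hh, hv]
  · have hsq : gMag Dh Dv x i ^ 2 = (Dh *ᵥ x) i ^ 2 + (Dv *ᵥ x) i ^ 2 :=
      Real.sq_sqrt (by positivity)
    simp only [nGradH, nGradV, if_neg h]
    field_simp
    linarith

lemma nGrad_pairing_le (x₁ x : Fin n → ℝ) (i : Fin n) :
    nGradH Dh Dv x₁ i * (Dh *ᵥ x) i + nGradV Dh Dv x₁ i * (Dv *ᵥ x) i ≤ gMag Dh Dv x i := by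
  by_cases h : gMag Dh Dv x₁ i = 0
  · simp only [nGradH, nGradV, if_pos h]
    by_cases hx : gMag Dh Dv x i = 0
    · obtain ⟨hh, hv⟩ := (gMag_eq_zero_iff Dh Dv).mp hx
      simp [hh, hv, hx]
    · exact (half_add_half_lt_sqrt hx).le
  · have hpos : 0 < gMag Dh Dv x₁ i := lt_of_le_of_ne (Real.sqrt_nonneg _) (Ne.symm h)
    simp only [nGradH, nGradV, if_neg h, div_mul_eq_mul_div, ← add_div]
    rw [div_le_iff₀' hpos]
    exact mul_add_mul_le_sqrt_mul_sqrt _ _ _ _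

variable {Dh Dv} in
lemma nGrad_pairing_lt_of_gMag_eq_zero {x₁ x : Fin n → ℝ} {i : Fin n}
    (hx₁ : gMag Dh Dv x₁ i = 0) (hx : gMag Dh Dv x i ≠ 0) :
    nGradH Dh Dv x₁ i * (Dh *ᵥ x) i + nGradV Dh Dv x₁ i * (Dv *ᵥ x) i < gMag Dh Dv x i := by
  simp only [nGradH, nGradV, if_pos hx₁]
  exact half_add_half_lt_sqrt hx

end NormalizedGradient

/-- If `DᵀD̂x₁ = Kᵀz` for some `z`, `Kx₂ = Kx₁`, and `x₂ ∉ S₁`, then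
`‖Dx₁‖_{2,1} < ‖Dx₂‖_{2,1}`. -/
theorem stmt5 (m n : ℕ) (K : Matrix (Fin m) (Fin n) ℝ)
    (Dh Dv : Matrix (Fin n) (Fin n) ℝ) (x₁ x₂ : Fin n → ℝ)
    (hz : ∃ z : Fin m → ℝ,
      Dhᵀ.mulVec (nGradH Dh Dv x₁) + Dvᵀ.mulVec (nGradV Dh Dv x₁) = Kᵀ.mulVec z)
    (hK : K.mulVec x₂ = K.mulVec x₁)
    (hx₂ : x₂ ∉ S1 Dh Dv x₁) :
    ∑ i, gMag Dh Dv x₁ i < ∑ i, gMag Dh Dv x₂ i := by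
  obtain ⟨z, hz⟩ := hz
  obtain ⟨i₀, hx₁i₀, hx₂i₀⟩ : ∃ i, gMag Dh Dv x₁ i = 0 ∧ gMag Dh Dv x₂ i ≠ 0 := by
    simpa [S1] using hx₂
  have hKz : (Kᵀ *ᵥ z) ⬝ᵥ x₂ = (Kᵀ *ᵥ z) ⬝ᵥ x₁ := by
    rw [mulVec_transpose, ← dotProduct_mulVec, ← dotProduct_mulVec, hK]
  calc ∑ i, gMag Dh Dv x₁ i
      = ∑ i, (nGradH Dh Dv x₁ i * (Dh *ᵥ x₁) i + nGradV Dh Dv x₁ i * (Dv *ᵥ x₁) i) :=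
        (sum_congr rfl fun i _ => nGrad_pairing_self Dh Dv x₁ i).symm
    _ = ∑ i, (nGradH Dh Dv x₁ i * (Dh *ᵥ x₂) i + nGradV Dh Dv x₁ i * (Dv *ᵥ x₂) i) := by
        rw [← transpose_mulVec_add_dotProduct, ← transpose_mulVec_add_dotProduct, hz, hKz]
    _ < ∑ i, gMag Dh Dv x₂ i :=
        sum_lt_sum (fun i _ => nGrad_pairing_le Dh Dv x₁ x₂ i)
          ⟨i₀, mem_univ _, nGrad_pairing_lt_of_gMag_eq_zero hx₁i₀ hx₂i₀⟩
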